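/- Let A be a ring with local units (for every finite set F ⊆ A there is an idempotent e ∈ A with ex = xe = x for all x ∈ F). If I is a maximal two-sided ideal of A, then either I is regular (I = I^⊥⊥) or I^⊥ = {0}. -/

import Mathlib

/-!
The double annihilator of `I` is an ideal containing `I`, so by maximality it is either `I` or
all of `A`. In the second case every element of `A` annihilates `I^⊥`; for `a ∈ I^⊥` and a
local unit `e` of `a` this gives `a = e * a = 0`.
-/

/-- The two-sided annihilator of a subset `X` of a ring `A`. -/
def perpSet {A : Type*} [NonUnitalRing A] (X : Set A) : Set A :=
  {a : A | ∀ x ∈ X, a * x = 0 ∧ x * a = 0}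

/-- A ring has local units if every finite subset admits an idempotent acting as a
two-sided unit on it. -/
def HasLocalUnits (A : Type*) [NonUnitalRing A] : Prop :=
  ∀ F : Finset A, ∃ e : A, e * e = e ∧ ∀ x ∈ F, e * x = x ∧ x * e = x

section Annihilator

variable {A : Type*} [NonUnitalRing A]

theorem zero_mem_perpSet (X : Set A) : (0 : A) ∈ perpSet X :=
  fun x _ ↦ ⟨zero_mul x, mul_zero x⟩

theorem subset_perpSet_perpSet (X : Set A) : X ⊆ perpSet (perpSet X) :=
  fun x hx _ ha ↦ ⟨(ha x hx).2, (ha x hx).1⟩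

theorem perpSet_univ (hA : HasLocalUnits A) :
    perpSet (Set.univ : Set A) = {0} := by
  refine Set.eq_singleton_iff_unique_mem.2 ⟨zero_mem_perpSet _, fun a ha ↦ ?_⟩
  obtain ⟨e, -, he⟩ := hA {a}
  calc a = e * a := (he a (Finset.mem_singleton_self a)).1.symm
    _ = 0 := (ha e trivial).2

namespace TwoSidedIdeal

def perp (I : TwoSidedIdeal A) : TwoSidedIdeal A :=
  mk' (perpSet I) (zero_mem_perpSet _)
    (fun ha hb x hx ↦ ⟨by rw [add_mul, (ha x hx).1, (hb x hx).1, add_zero],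
      by rw [mul_add, (ha x hx).2, (hb x hx).2, add_zero]⟩)
    (fun ha x hx ↦ ⟨by rw [neg_mul, (ha x hx).1, neg_zero],
      by rw [mul_neg, (ha x hx).2, neg_zero]⟩)
    (fun {r a} ha x hx ↦ ⟨by rw [mul_assoc, (ha x hx).1, mul_zero],
      by rw [← mul_assoc, (ha (x * r) (I.mul_mem_right x r hx)).2]⟩)
    (fun {a r} ha x hx ↦ ⟨by rw [mul_assoc, (ha (r * x) (I.mul_mem_left r x hx)).1],
      by rw [← mul_assoc, (ha x hx).2, zero_mul]⟩)

@[simp]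
theorem coe_perp (I : TwoSidedIdeal A) : (I.perp : Set A) = perpSet I :=
  coe_mk' _ _ _ _ _ _

theorem le_perp_perp (I : TwoSidedIdeal A) : I ≤ I.perp.perp := by
  intro x hx
  rw [← SetLike.mem_coe, coe_perp, coe_perp]
  exact subset_perpSet_perpSet _ hx

theorem perpSet_eq_zero_of_perp_perp_eq_top (hA : HasLocalUnits A) {I : TwoSidedIdeal A}
    (h : I.perp.perp = ⊤) : perpSet (I : Set A) = {0} := by
  have huniv : perpSet (perpSet (I : Set A)) = Set.univ := by
    rw [← coe_perp, ← coe_perp, h, coe_top]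
  refine Set.Subset.antisymm ?_ (Set.singleton_subset_iff.2 (zero_mem_perpSet _))
  calc perpSet (I : Set A) ⊆ perpSet (perpSet (perpSet (I : Set A))) :=
        subset_perpSet_perpSet _
    _ = {0} := by rw [huniv, perpSet_univ hA]

end TwoSidedIdeal

end Annihilator

theorem maximal_ideal_regular_or_perp_zero_general {A : Type*} [NonUnitalRing A]
    (hA : HasLocalUnits A) (I : TwoSidedIdeal A)
    (hmax : ∀ J : TwoSidedIdeal A, I ≤ J → J = I ∨ J = ⊤) :
    perpSet (perpSet (I : Set A)) = (I : Set A) ∨ perpSet (I : Set A) = {0} := by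
  rcases hmax I.perp.perp I.le_perp_perp with h | h
  · left
    rw [← TwoSidedIdeal.coe_perp, ← TwoSidedIdeal.coe_perp, h]
  · exact Or.inr (TwoSidedIdeal.perpSet_eq_zero_of_perp_perp_eq_top hA h)

/-- If `A` is a ring with local units and `I` is a maximal two-sided ideal of `A`,
then either `I` is regular (`I = I^⊥⊥`) or `I^⊥ = {0}`. -/
theorem maximal_ideal_regular_or_perp_zero {A : Type*} [NonUnitalRing A]
    (hA : HasLocalUnits A) (I : TwoSidedIdeal A)
    (hne : I ≠ ⊤) (hmax : ∀ J : TwoSidedIdeal A, I ≤ J → J = I ∨ J = ⊤) :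
    perpSet (perpSet (I : Set A)) = (I : Set A) ∨ perpSet (I : Set A) = {0} :=
  maximal_ideal_regular_or_perp_zero_general hA I hmax
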